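/- arXiv:2005.06322 — 2 statements merged into one kernel-verified Lean document; each statement's English description precedes it below -/
import Mathlib

section
/- For every unbounded modulus function f there exist weight functions g₁, g₂ such that 𝒵_{g₁}(f) ⊊ 𝒵(f) ⊊ 𝒵_{g₂}(f). -/
open Filter Set

/-- A modulus function: nonnegative, vanishing exactly at 0, subadditive,
non-decreasing, right continuous at 0 (all on `[0,∞)`). -/
def IsModulus (f : ℝ → ℝ) : Prop :=
  (∀ x : ℝ, 0 ≤ x → 0 ≤ f x) ∧
  (∀ x : ℝ, 0 ≤ x → (f x = 0 ↔ x = 0)) ∧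
  (∀ x y : ℝ, 0 ≤ x → 0 ≤ y → f (x + y) ≤ f x + f y) ∧
  (∀ x y : ℝ, 0 ≤ x → x ≤ y → f x ≤ f y) ∧
  ContinuousWithinAt f (Set.Ici 0) 0

/-- An unbounded modulus function. -/
def IsUnboundedModulus (f : ℝ → ℝ) : Prop :=
  IsModulus f ∧ Tendsto f atTop atTop

/-- A weight function `g : ℕ → [0,∞)` with `g n → ∞` and `n / g n ↛ 0`. -/
def IsWeight (g : ℕ → ℝ) : Prop :=
  (∀ n, 0 ≤ g n) ∧ Tendsto g atTop atTop ∧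
  ¬ Tendsto (fun n : ℕ => (n : ℝ) / g n) atTop (nhds 0)

open scoped Classical in
/-- `|A ∩ [1,n]|`. -/
noncomputable def cnt (A : Set ℕ) (n : ℕ) : ℕ :=
  ((Finset.Icc 1 n).filter (fun m => m ∈ A)).card

/-- The ideal `𝒵_g(f)` of sets whose `f`-density of weight `g` is zero
(for nonnegative sequences, `limsup = 0` is equivalent to convergence to `0`). -/
noncomputable def Zd (f : ℝ → ℝ) (g : ℕ → ℝ) : Set (Set ℕ) :=
  {A | Tendsto (fun n => f (cnt A n) / f (g n)) atTop (nhds 0)}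

/-! For `g₁` take the counting function of an infinite set `A = {N 0 < N 1 < ⋯}` so sparse that
`f (N j) ≥ j * f (j + 1)`: then `A ∈ 𝒵(f)`, whereas `f (|A ∩ [1,n]|) / f (g₁ n) = 1`; and
`g₁ n ≤ n` gives `𝒵_{g₁}(f) ⊆ 𝒵(f)`.

For `g₂` choose times `u k` with `u (k+1) > 2 u k` and `f (u (k+1)) ≥ u k * f (2 u k)`, and let
`A` be the union of the blocks `(u k, 2 u k]`. By subadditivity
`f (|A ∩ [1, 2 u k]|) ≥ f (2 u k) / 2`, so `A ∉ 𝒵(f)`, while the ratio taken at the times `u k`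
tends to `0`. Let `g₂ = id` at these times and so large elsewhere that `f (g₂ n) ≥ n * f n`;
then `n / g₂ n ↛ 0`, `𝒵(f) ⊆ 𝒵_{g₂}(f)`, and `A ∈ 𝒵_{g₂}(f)` because off the times `u k` the
ratio is at most `1 / n`. -/

namespace IsModulus

variable {f : ℝ → ℝ}

lemma nonneg (hf : IsModulus f) {x : ℝ} (hx : 0 ≤ x) : 0 ≤ f x := hf.1 x hx

lemma pos (hf : IsModulus f) {x : ℝ} (hx : 0 < x) : 0 < f x :=
  (hf.nonneg hx.le).lt_of_ne fun h => hx.ne' ((hf.2.1 x hx.le).mp h.symm)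

lemma mono (hf : IsModulus f) {x y : ℝ} (hx : 0 ≤ x) (hxy : x ≤ y) : f x ≤ f y :=
  hf.2.2.2.1 x y hx hxy

lemma natCast_mono (hf : IsModulus f) {m n : ℕ} (h : m ≤ n) : f m ≤ f n :=
  hf.mono m.cast_nonneg (Nat.cast_le.mpr h)

lemma map_two_mul_le (hf : IsModulus f) {x : ℝ} (hx : 0 ≤ x) : f (2 * x) ≤ 2 * f x := by
  simpa [two_mul] using hf.2.2.1 x x hx hx

end IsModulus

section Counting

variable {A : Set ℕ} {n : ℕ}

lemma card_le_cnt {s : Finset ℕ} (hs : ∀ m ∈ s, m ∈ A ∧ 1 ≤ m ∧ m ≤ n) : s.card ≤ cnt A n := by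
  classical
  refine Finset.card_le_card fun m hm => ?_
  obtain ⟨hmA, h1, hmn⟩ := hs m hm
  simpa [cnt, hmA] using And.intro h1 hmn

lemma cnt_le_card {s : Finset ℕ} (hs : ∀ m ∈ A, 1 ≤ m → m ≤ n → m ∈ s) : cnt A n ≤ s.card := by
  classical
  refine Finset.card_le_card fun m hm => ?_
  simp only [Finset.mem_filter, Finset.mem_Icc] at hm
  exact hs m hm.2 hm.1.1 hm.1.2

lemma cnt_le (A : Set ℕ) (n : ℕ) : cnt A n ≤ n := by
  simpa using cnt_le_card (A := A) (s := Finset.Icc 1 n)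
    fun m _ h1 hmn => Finset.mem_Icc.mpr ⟨h1, hmn⟩

lemma tendsto_cnt_atTop (hA : A.Infinite) : Tendsto (cnt A) atTop atTop := by
  refine tendsto_atTop.mpr fun b => ?_
  obtain ⟨s, hsA, rfl⟩ := (hA.sdiff (Set.finite_singleton 0)).exists_subset_card_eq b
  filter_upwards [eventually_ge_atTop (s.sup id)] with n hn
  refine card_le_cnt fun m hm => ?_
  obtain ⟨hmA, hm0⟩ := hsA hm
  exact ⟨hmA, Nat.one_le_iff_ne_zero.mpr hm0, (Finset.le_sup (f := id) hm).trans hn⟩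

lemma le_of_lt_cnt_range {N : ℕ → ℕ} (hN : StrictMono N) {j : ℕ} (h : j < cnt (Set.range N) n) :
    N j ≤ n := by
  classical
  by_contra! hn
  have : cnt (Set.range N) n ≤ ((Finset.range j).image N).card := by
    refine cnt_le_card ?_
    rintro _ ⟨i, rfl⟩ - hi
    exact Finset.mem_image_of_mem N (Finset.mem_range.mpr (hN.lt_iff_lt.mp (hi.trans_lt hn)))
  rw [Finset.card_image_of_injective _ hN.injective, Finset.card_range] at this
  omega

end Counting

variable {f : ℝ → ℝ}

lemma Zd_mono (hf : IsModulus f) {g g' : ℕ → ℝ} (h : ∀ᶠ n in atTop, 0 < g n ∧ g n ≤ g' n) :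
    Zd f g ⊆ Zd f g' := by
  intro A hA
  refine squeeze_zero' ?_ ?_ hA
  · filter_upwards [h] with n hn
    exact div_nonneg (hf.nonneg (Nat.cast_nonneg _)) (hf.nonneg (hn.1.trans_le hn.2).le)
  · filter_upwards [h] with n hn
    exact div_le_div_of_nonneg_left (hf.nonneg (Nat.cast_nonneg _)) (hf.pos hn.1)
      (hf.mono hn.1.le hn.2)

lemma isWeight_cnt {A : Set ℕ} (hA : A.Infinite) : IsWeight fun n => (cnt A n : ℝ) := by
  refine ⟨fun n => Nat.cast_nonneg _, tendsto_natCast_atTop_iff.mpr (tendsto_cnt_atTop hA),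
    fun h => ?_⟩
  obtain ⟨n, hn, hpos⟩ := ((h.eventually (gt_mem_nhds one_pos)).and
    ((tendsto_cnt_atTop hA).eventually_ge_atTop 1)).exists
  have : (cnt A n : ℝ) ≤ n := Nat.cast_le.mpr (cnt_le A n)
  exact hn.not_ge ((one_le_div (Nat.cast_pos.mpr hpos)).mpr this)

lemma notMem_Zd_cnt (hf : IsModulus f) {A : Set ℕ} (hA : A.Infinite) :
    A ∉ Zd f fun n => (cnt A n : ℝ) := by
  intro h
  have hone : ∀ᶠ n in atTop, f (cnt A n) / f (cnt A n) = 1 := by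
    filter_upwards [(tendsto_cnt_atTop hA).eventually_ge_atTop 1] with n hn
    exact div_self (hf.pos (by exact_mod_cast hn)).ne'
  exact zero_ne_one (tendsto_nhds_unique (h.congr' hone) tendsto_const_nhds)

lemma exists_infinite_mem_Zd (hf : IsUnboundedModulus f) :
    ∃ A : Set ℕ, A.Infinite ∧ A ∈ Zd f fun n => (n : ℝ) := by
  have hf' := hf.2.comp tendsto_natCast_atTop_atTop
  obtain ⟨N, hN, hNf⟩ := extraction_forall_of_eventually
    fun j => hf'.eventually_ge_atTop ((j : ℝ) * f (j + 1 : ℕ))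
  have hA : (Set.range N).Infinite := Set.infinite_range_of_injective hN.injective
  refine ⟨Set.range N, hA, squeeze_zero' (g := fun n => ((cnt (Set.range N) n : ℝ) - 1)⁻¹) ?_ ?_ ?_⟩
  · exact Eventually.of_forall fun n =>
      div_nonneg (hf.1.nonneg (Nat.cast_nonneg _)) (hf.1.nonneg (Nat.cast_nonneg _))
  · filter_upwards [(tendsto_cnt_atTop hA).eventually_ge_atTop 2] with n hn
    obtain ⟨j, hj⟩ : ∃ j, cnt (Set.range N) n = j + 1 := ⟨_, (Nat.sub_add_cancel (by omega)).symm⟩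
    have hj1 : (1 : ℝ) ≤ j := by exact_mod_cast (by omega : 1 ≤ j)
    have hfj : 0 < f (j + 1 : ℕ) := hf.1.pos (by positivity)
    have hfn : (j : ℝ) * f (j + 1 : ℕ) ≤ f n :=
      (hNf j).trans (hf.1.natCast_mono (le_of_lt_cnt_range hN (by omega)))
    have hfn_pos : 0 < f n := (by positivity : (0 : ℝ) < j * f (j + 1 : ℕ)).trans_le hfn
    rw [hj, Nat.cast_add_one, add_sub_cancel_right, div_le_iff₀ hfn_pos, ← Nat.cast_add_one]
    calc f (j + 1 : ℕ) = (j : ℝ)⁻¹ * (j * f (j + 1 : ℕ)) := by field_simp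
      _ ≤ (j : ℝ)⁻¹ * f n := by gcongr
  · refine tendsto_inv_atTop_zero.comp (tendsto_atTop_add_const_right _ (-1) ?_)
    exact tendsto_natCast_atTop_iff.mpr (tendsto_cnt_atTop hA)

lemma exists_isWeight_Zd_ssubset (hf : IsUnboundedModulus f) :
    ∃ g : ℕ → ℝ, IsWeight g ∧ Zd f g ⊂ Zd f fun n => (n : ℝ) := by
  obtain ⟨A, hA, hAZ⟩ := exists_infinite_mem_Zd hf
  refine ⟨_, isWeight_cnt hA, Zd_mono hf.1 ?_, fun h => notMem_Zd_cnt hf.1 hA (h hAZ)⟩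
  filter_upwards [(tendsto_cnt_atTop hA).eventually_ge_atTop 1] with n hn
  exact ⟨by exact_mod_cast hn, Nat.cast_le.mpr (cnt_le A n)⟩

def blockSet (u : ℕ → ℕ) : Set ℕ := {m | ∃ k, u k < m ∧ m ≤ 2 * u k}

lemma le_cnt_blockSet (u : ℕ → ℕ) (k : ℕ) : u k ≤ cnt (blockSet u) (2 * u k) := by
  have h := card_le_cnt (A := blockSet u) (n := 2 * u k) (s := Finset.Ioc (u k) (2 * u k))
    fun m hm => by
      obtain ⟨h1, h2⟩ := Finset.mem_Ioc.mp hm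
      exact ⟨⟨k, h1, h2⟩, by omega, h2⟩
  rwa [Nat.card_Ioc, two_mul, Nat.add_sub_cancel, ← two_mul] at h

lemma cnt_blockSet_le {u : ℕ → ℕ} (hu : ∀ k, 2 * u k < u (k + 1)) (k : ℕ) :
    cnt (blockSet u) (u (k + 1)) ≤ 2 * u k := by
  have hmono : StrictMono u := strictMono_nat_of_lt_succ fun k => by have := hu k; omega
  have h := cnt_le_card (A := blockSet u) (n := u (k + 1)) (s := Finset.Icc 1 (2 * u k)) ?_
  · simpa using h
  rintro m ⟨j, hjm, hmj⟩ h1 hm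
  have hjk : j ≤ k := Nat.lt_succ_iff.mp (hmono.lt_iff_lt.mp (hjm.trans_le hm))
  have := hmono.monotone hjk
  exact Finset.mem_Icc.mpr ⟨h1, by omega⟩

lemma blockSet_notMem_Zd (hf : IsModulus f) {u : ℕ → ℕ} (hu : StrictMono u) :
    blockSet u ∉ Zd f fun n => (n : ℝ) := by
  intro h
  have h2u : Tendsto (fun k => 2 * u k) atTop atTop :=
    tendsto_id.const_mul_atTop' two_pos |>.comp hu.tendsto_atTop
  obtain ⟨k, hk, hk1⟩ := (((h.comp h2u).eventually (gt_mem_nhds one_half_pos)).and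
    (eventually_ge_atTop 1)).exists
  have hfu : 0 < f (u k) := hf.pos (by exact_mod_cast (hu.id_le k).trans' hk1)
  have hnum : f (u k) ≤ f (cnt (blockSet u) (2 * u k)) := hf.natCast_mono (le_cnt_blockSet u k)
  have hden : f (2 * u k : ℕ) ≤ 2 * f (u k) := by
    simpa using hf.map_two_mul_le (Nat.cast_nonneg (u k))
  simp only [Function.comp_apply] at hk
  rw [div_lt_iff₀ (hfu.trans_le (hf.natCast_mono (by omega)))] at hk
  linarith

lemma exists_strictMono_tendsto_cnt_blockSet (hf : IsUnboundedModulus f) :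
    ∃ u : ℕ → ℕ, StrictMono u ∧
      Tendsto (fun k => f (cnt (blockSet u) (u k)) / f (u k)) atTop (nhds 0) := by
  have hf' := hf.2.comp tendsto_natCast_atTop_atTop
  choose next hnext using fun m : ℕ => ((eventually_gt_atTop (2 * m)).and
    (hf'.eventually_ge_atTop ((m : ℝ) * f (2 * m : ℕ)))).exists
  set u : ℕ → ℕ := fun k => next^[k] 0
  have hstep : ∀ k, 2 * u k < u (k + 1) ∧ (u k : ℝ) * f (2 * u k : ℕ) ≤ f (u (k + 1)) :=
    fun k => by simpa only [u, Function.iterate_succ_apply', Function.comp_apply] using hnext (u k)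
  have hu : StrictMono u := strictMono_nat_of_lt_succ fun k => by have := (hstep k).1; omega
  refine ⟨u, hu, (tendsto_add_atTop_iff_nat 1).mp ?_⟩
  refine squeeze_zero' (Eventually.of_forall fun k =>
    div_nonneg (hf.1.nonneg (Nat.cast_nonneg _)) (hf.1.nonneg (Nat.cast_nonneg _))) ?_
    (tendsto_inv_atTop_zero.comp (tendsto_natCast_atTop_atTop.comp hu.tendsto_atTop))
  filter_upwards [eventually_ge_atTop 1] with k hk
  have hpos : (0 : ℝ) < u k := by exact_mod_cast (hu.id_le k).trans' hk
  have hf2u : 0 < f (2 * u k : ℕ) := hf.1.pos (by push_cast; positivity)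
  have hnum : f (cnt (blockSet u) (u (k + 1))) ≤ f (2 * u k : ℕ) :=
    hf.1.natCast_mono (cnt_blockSet_le (fun k => (hstep k).1) k)
  calc f (cnt (blockSet u) (u (k + 1))) / f (u (k + 1))
      ≤ f (2 * u k : ℕ) / ((u k : ℝ) * f (2 * u k : ℕ)) :=
        div_le_div₀ hf2u.le hnum (by positivity) (hstep k).2
    _ = (u k : ℝ)⁻¹ := by field_simp

lemma exists_ge_eq_on_range (hf : Tendsto f atTop atTop) (u : ℕ → ℕ) :
    ∃ g : ℕ → ℝ, (∀ n : ℕ, (n : ℝ) ≤ g n) ∧ (∀ k, g (u k) = u k) ∧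
      ∀ n ∉ Set.range u, n * f n ≤ f (g n) := by
  classical
  choose x hx using fun n : ℕ =>
    ((eventually_ge_atTop (n : ℝ)).and (hf.eventually_ge_atTop (n * f n))).exists
  refine ⟨fun n => if n ∈ Set.range u then (n : ℝ) else x n, fun n => ?_,
    fun k => if_pos ⟨k, rfl⟩, fun n hn => by simpa only [if_neg hn] using (hx n).2⟩
  dsimp only
  split_ifs
  exacts [le_rfl, (hx n).1]

section Sampling

variable {g : ℕ → ℝ} {u : ℕ → ℕ}

lemma isWeight_of_ge_of_eq_on_range (hu : StrictMono u) (hle : ∀ n : ℕ, (n : ℝ) ≤ g n)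
    (hfix : ∀ k, g (u k) = u k) : IsWeight g := by
  refine ⟨fun n => n.cast_nonneg.trans (hle n),
    tendsto_atTop_mono hle tendsto_natCast_atTop_atTop, fun h => ?_⟩
  have hone : ∀ᶠ k in atTop, (u k : ℝ) / g (u k) = 1 := by
    filter_upwards [eventually_ge_atTop 1] with k hk
    rw [hfix]
    exact div_self (Nat.cast_ne_zero.mpr (Nat.one_le_iff_ne_zero.mp ((hu.id_le k).trans' hk)))
  exact zero_ne_one (tendsto_nhds_unique ((h.comp hu.tendsto_atTop).congr' hone) tendsto_const_nhds)

lemma mem_Zd_of_tendsto_sample (hf : IsModulus f) (hu : StrictMono u)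
    (hle : ∀ n : ℕ, (n : ℝ) ≤ g n) (hfix : ∀ k, g (u k) = u k)
    (hoff : ∀ n ∉ Set.range u, n * f n ≤ f (g n)) {A : Set ℕ}
    (hA : Tendsto (fun k => f (cnt A (u k)) / f (u k)) atTop (nhds 0)) : A ∈ Zd f g := by
  refine tendsto_order.2 ⟨fun a ha => Eventually.of_forall fun n => ha.trans_le
    (div_nonneg (hf.nonneg (Nat.cast_nonneg _)) (hf.nonneg (n.cast_nonneg.trans (hle n)))),
    fun ε hε => ?_⟩
  obtain ⟨K, hK⟩ := eventually_atTop.mp ((tendsto_order.1 hA).2 ε hε)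
  filter_upwards [eventually_ge_atTop (u K), eventually_ge_atTop 1,
    (tendsto_order.1 (tendsto_inv_atTop_zero.comp tendsto_natCast_atTop_atTop)).2 ε hε]
    with n hnK hn1 hnε
  by_cases hn : n ∈ Set.range u
  · obtain ⟨k, rfl⟩ := hn
    simpa only [hfix] using hK k (hu.le_iff_le.mp hnK)
  · have hfn : 0 < f n := hf.pos (by exact_mod_cast hn1)
    calc f (cnt A n) / f (g n) ≤ f n / (n * f n) :=
          div_le_div₀ hfn.le (hf.natCast_mono (cnt_le A n)) (by positivity) (hoff n hn)
      _ = (n : ℝ)⁻¹ := by field_simp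
      _ < ε := hnε

end Sampling

lemma exists_isWeight_Zd_ssupset (hf : IsUnboundedModulus f) :
    ∃ g : ℕ → ℝ, IsWeight g ∧ (Zd f fun n => (n : ℝ)) ⊂ Zd f g := by
  obtain ⟨u, hu, hsample⟩ := exists_strictMono_tendsto_cnt_blockSet hf
  obtain ⟨g, hle, hfix, hoff⟩ := exists_ge_eq_on_range hf.2 u
  have hA := mem_Zd_of_tendsto_sample hf.1 hu hle hfix hoff hsample
  refine ⟨g, isWeight_of_ge_of_eq_on_range hu hle hfix, Zd_mono hf.1 ?_,
    fun h => blockSet_notMem_Zd hf.1 hu (h hA)⟩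
  filter_upwards [eventually_ge_atTop 1] with n hn
  exact ⟨by exact_mod_cast hn, hle n⟩

theorem stmt9 (f : ℝ → ℝ) (hf : IsUnboundedModulus f) :
    ∃ g₁ g₂ : ℕ → ℝ, IsWeight g₁ ∧ IsWeight g₂ ∧
      Zd f g₁ ⊂ Zd f (fun n => (n : ℝ)) ∧
      Zd f (fun n => (n : ℝ)) ⊂ Zd f g₂ := by
  obtain ⟨g₁, hg₁, hsub₁⟩ := exists_isWeight_Zd_ssubset hf
  obtain ⟨g₂, hg₂, hsub₂⟩ := exists_isWeight_Zd_ssupset hf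
  exact ⟨g₁, g₂, hg₁, hg₂, hsub₁, hsub₂⟩
end

section
/- Let (a_n) be a q-bounded arithmetic sequence (ratios q_n ≤ M for some M ≥ 2). Let x ∈ 𝕋 with supp(x) = ⋃_{n≥1} [l_n, k_n] where l_n ≤ k_n < l_{n+1} − 1, and suppose the set A = {l_n : n ∈ ℕ} has positive upper f-density of weight g. Then x ∉ t^{f,g}_{(a_n)}(𝕋); specifically, for every n ∈ B = {l − 2 : l ∈ A}, ‖a_n x‖ ∈ [1/M², 1/2], and B has positive upper f-density of weight g. -/
open Filter Set

/-- The `f^g`-statistically characterized subgroup `t^{f,g}_{(a_n)}(𝕋)`. -/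
noncomputable def statChar (f : ℝ → ℝ) (g : ℕ → ℝ) (a : ℕ → ℤ) :
    Set (AddCircle (1 : ℝ)) :=
  {x | ∀ ε > 0, {n : ℕ | ε ≤ ‖(a n) • x‖} ∈ Zd f g}

/-- An arithmetic sequence: `a 0 = 1`, strictly increasing, `a n ∣ a (n+1)`,
and all ratios `q_n ≥ 2`. -/
def IsArith (a : ℕ → ℕ) : Prop :=
  a 0 = 1 ∧ StrictMono a ∧ (∀ n, a n ∣ a (n + 1)) ∧ (∀ n, 2 * a n ≤ a (n + 1))

/-- Canonical representation `x = Σ_{n≥1} c_n / a_n` with `0 ≤ c_n ≤ q_n - 1`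
and `c_n < q_n - 1` infinitely often; here `q_n = a n / a (n-1)`. -/
def IsCanonRep (a : ℕ → ℕ) (c : ℕ → ℕ) (x : AddCircle (1 : ℝ)) : Prop :=
  c 0 = 0 ∧ (∀ n, 1 ≤ n → c n ≤ a n / a (n - 1) - 1) ∧
  (∀ N, ∃ n, N ≤ n ∧ c n < a n / a (n - 1) - 1) ∧
  x = ((∑' n, (c n : ℝ) / (a n : ℝ) : ℝ) : AddCircle (1 : ℝ))

/-!
If `m + 2` is the left end of a block of the support, then `c (m+1) = 0` and `c (m+2) ≥ 1`.
Multiplying `x` by `a m` turns the digits up to `m` into an integer, leaving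
`a m * ∑_{n ≥ m+2} c n / a n`. This is at least `a m / a (m+2) ≥ 1 / M^2`, and since each digit
satisfies `c n / a n ≤ 1 / a (n-1) - 1 / a n`, the sum telescopes to at most
`a m / a (m+1) ≤ 1/2`. Shifting a set by `2` changes its counting function by at most `2`, which
the subadditivity of `f` and `f (g n) → ∞` absorb, so `B` has positive density as well; since
`B ⊆ {n | 1 / M^2 ≤ ‖a n • x‖}`, the point `x` is not in the subgroup.
-/

lemma cnt_mono {A B : Set ℕ} (h : A ⊆ B) (n : ℕ) : cnt A n ≤ cnt B n := by
  classical
  exact Finset.card_le_card fun m hm => by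
    simp only [Finset.mem_filter] at hm ⊢
    exact ⟨hm.1, h hm.2⟩

lemma cnt_le_cnt_preimage_add (A : Set ℕ) (s n : ℕ) :
    cnt A n ≤ cnt ((· + s) ⁻¹' A) n + s := by
  classical
  have hsub : (Finset.Icc 1 n).filter (· ∈ A) ⊆ Finset.Icc 1 s ∪
      ((Finset.Icc 1 n).filter (· ∈ (· + s) ⁻¹' A)).map (addRightEmbedding s) := by
    intro v hv
    simp only [Finset.mem_filter, Finset.mem_Icc] at hv
    rcases le_or_gt v s with hvs | hvs
    · exact Finset.mem_union_left _ (Finset.mem_Icc.2 ⟨hv.1.1, hvs⟩)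
    · refine Finset.mem_union_right _ (Finset.mem_map.2 ⟨v - s, ?_, Nat.sub_add_cancel hvs.le⟩)
      simp only [Finset.mem_filter, Finset.mem_Icc, Set.mem_preimage, Nat.sub_add_cancel hvs.le]
      exact ⟨⟨by omega, by omega⟩, hv.2⟩
  calc cnt A n ≤ (Finset.Icc 1 s).card + cnt ((· + s) ⁻¹' A) n := by
        unfold cnt
        exact (Finset.card_le_card hsub).trans <|
          (Finset.card_union_le _ _).trans_eq (by rw [Finset.card_map])
    _ = cnt ((· + s) ⁻¹' A) n + s := by rw [Nat.card_Icc, add_comm]; omega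

section Density

variable {f : ℝ → ℝ} {g : ℕ → ℝ}

theorem Zd.of_cnt_le_add (hf : IsUnboundedModulus f) (hg : Tendsto g atTop atTop)
    {A B : Set ℕ} (C : ℕ) (h : ∀ n, cnt A n ≤ cnt B n + C) (hB : B ∈ Zd f g) :
    A ∈ Zd f g := by
  obtain ⟨⟨hf0, -, hfadd, hfmono, -⟩, hftop⟩ := hf
  have hfg : Tendsto (fun n => f (g n)) atTop atTop := hftop.comp hg
  have hlim : Tendsto (fun n => f (cnt B n) / f (g n) + f C / f (g n)) atTop (nhds 0) := by
    simpa using hB.add (tendsto_const_nhds.div_atTop hfg)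
  refine tendsto_of_tendsto_of_tendsto_of_le_of_le' tendsto_const_nhds hlim ?_ ?_
  all_goals filter_upwards [hfg.eventually_gt_atTop 0] with n hn
  · exact div_nonneg (hf0 _ (Nat.cast_nonneg _)) hn.le
  · rw [← add_div]
    gcongr
    calc f (cnt A n) ≤ f ((cnt B n : ℝ) + C) :=
          hfmono _ _ (Nat.cast_nonneg _) (by exact_mod_cast h n)
      _ ≤ f (cnt B n) + f C := hfadd _ _ (Nat.cast_nonneg _) (Nat.cast_nonneg _)

theorem Zd.mono (hf : IsUnboundedModulus f) (hg : Tendsto g atTop atTop) {A B : Set ℕ}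
    (h : A ⊆ B) (hB : B ∈ Zd f g) : A ∈ Zd f g :=
  Zd.of_cnt_le_add hf hg 0 (cnt_mono h) hB

theorem Zd.of_preimage_add (hf : IsUnboundedModulus f) (hg : Tendsto g atTop atTop)
    {A : Set ℕ} (s : ℕ) (h : (· + s) ⁻¹' A ∈ Zd f g) : A ∈ Zd f g :=
  Zd.of_cnt_le_add hf hg s (cnt_le_cnt_preimage_add A s) h

end Density

open Finset in
theorem sum_range_nat_add_le_of_le_sub {u b : ℕ → ℝ} (hb : ∀ n, 0 ≤ b n)
    (hu : ∀ n, u (n + 1) ≤ b n - b (n + 1)) (m N : ℕ) :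
    ∑ i ∈ range N, u (i + (m + 1)) ≤ b m :=
  calc ∑ i ∈ range N, u (i + (m + 1))
      ≤ ∑ i ∈ range N, (b (i + m) - b (i + 1 + m)) :=
        sum_le_sum fun i _ => by simpa only [Nat.add_right_comm, ← add_assoc] using hu (i + m)
    _ = b m - b (N + m) := by simpa using sum_range_sub' (fun i => b (i + m)) N
    _ ≤ b m := sub_le_self _ (hb _)

theorem summable_of_le_sub {u b : ℕ → ℝ} (hu0 : ∀ n, 0 ≤ u n) (hb : ∀ n, 0 ≤ b n)
    (hu : ∀ n, u (n + 1) ≤ b n - b (n + 1)) : Summable u :=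
  (summable_nat_add_iff 1).1 <|
    summable_of_sum_range_le (fun _ => hu0 _) (sum_range_nat_add_le_of_le_sub hb hu 0)

theorem tsum_nat_add_le_of_le_sub {u b : ℕ → ℝ} (hu0 : ∀ n, 0 ≤ u n) (hb : ∀ n, 0 ≤ b n)
    (hu : ∀ n, u (n + 1) ≤ b n - b (n + 1)) (m : ℕ) :
    ∑' i, u (i + (m + 1)) ≤ b m :=
  Real.tsum_le_of_sum_range_le (fun _ => hu0 _) (sum_range_nat_add_le_of_le_sub hb hu m)

namespace IsArith

variable {a : ℕ → ℕ}

theorem pos (ha : IsArith a) (n : ℕ) : 0 < a n := by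
  have := ha.2.1.monotone n.zero_le
  rw [ha.1] at this
  omega

theorem dvd_of_le (ha : IsArith a) {i j : ℕ} (hij : i ≤ j) : a i ∣ a j := by
  induction j, hij using Nat.le_induction with
  | base => rfl
  | succ j _ ih => exact ih.trans (ha.2.2.1 j)

theorem succ_le_mul (ha : IsArith a) {M : ℕ} (hqb : ∀ n, 1 ≤ n → a n / a (n - 1) ≤ M) (n : ℕ) :
    a (n + 1) ≤ M * a n :=
  calc a (n + 1) = a (n + 1) / a n * a n := (Nat.div_mul_cancel (ha.2.2.1 n)).symm
    _ ≤ M * a n := Nat.mul_le_mul_right _ (by simpa using hqb (n + 1) n.succ_pos)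

theorem digit_div_le (ha : IsArith a) {c : ℕ → ℕ}
    (hc : ∀ n, 1 ≤ n → c n ≤ a n / a (n - 1) - 1) (n : ℕ) :
    (c (n + 1) : ℝ) / a (n + 1) ≤ 1 / a n - 1 / a (n + 1) := by
  have hq : 2 ≤ a (n + 1) / a n := (Nat.le_div_iff_mul_le (ha.pos n)).2 (by linarith [ha.2.2.2 n])
  have hcq : (c (n + 1) + 1) * a n ≤ a (n + 1) :=
    calc (c (n + 1) + 1) * a n ≤ a (n + 1) / a n * a n :=
          Nat.mul_le_mul_right _ <| by
            have := hc (n + 1) n.succ_pos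
            simp only [Nat.add_sub_cancel] at this
            omega
      _ = a (n + 1) := Nat.div_mul_cancel (ha.2.2.1 n)
  have hpos : (0 : ℝ) < a n := by exact_mod_cast ha.pos n
  have hpos' : (0 : ℝ) < a (n + 1) := by exact_mod_cast ha.pos (n + 1)
  rw [div_sub_div _ _ hpos.ne' hpos'.ne', div_le_div_iff₀ hpos' (by positivity)]
  have : ((c (n + 1) : ℝ) + 1) * a n ≤ a (n + 1) := by exact_mod_cast hcq
  nlinarith

open Finset in
theorem zsmul_coe_tsum_eq (ha : IsArith a) {c : ℕ → ℕ} (hs : Summable fun n => (c n : ℝ) / a n)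
    (m : ℕ) :
    (a m : ℤ) • ((∑' n, (c n : ℝ) / a n : ℝ) : AddCircle (1 : ℝ)) =
      ((a m * ∑' i, (c (i + (m + 1)) : ℝ) / a (i + (m + 1)) : ℝ) : AddCircle (1 : ℝ)) := by
  have hint : a m * ∑ i ∈ range (m + 1), (c i : ℝ) / a i =
      ((∑ i ∈ range (m + 1), c i * (a m / a i) : ℕ) : ℝ) := by
    push_cast [mul_sum]
    refine sum_congr rfl fun i hi => ?_
    have := ha.pos i
    rw [Nat.cast_div (ha.dvd_of_le (Nat.lt_succ_iff.1 (mem_range.1 hi))) (by positivity)]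
    field_simp
  have hnat (N : ℕ) : ((N : ℝ) : AddCircle (1 : ℝ)) = 0 := by
    rw [← nsmul_one, AddCircle.coe_nsmul, AddCircle.coe_period, nsmul_zero]
  rw [natCast_zsmul, ← AddCircle.coe_nsmul, nsmul_eq_mul, ← hs.sum_add_tsum_nat_add (m + 1),
    mul_add, hint, AddCircle.coe_add, hnat, zero_add]

theorem summable_digit_div (ha : IsArith a) {c : ℕ → ℕ}
    (hc : ∀ n, 1 ≤ n → c n ≤ a n / a (n - 1) - 1) : Summable fun n => (c n : ℝ) / a n :=
  summable_of_le_sub (fun _ => div_nonneg (Nat.cast_nonneg _) (Nat.cast_nonneg _))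
    (fun _ => one_div_nonneg.2 (Nat.cast_nonneg _)) (ha.digit_div_le hc)

theorem mul_tsum_tail_mem_Icc (ha : IsArith a) {M : ℕ} (hqb : ∀ n, 1 ≤ n → a n / a (n - 1) ≤ M)
    {c : ℕ → ℕ} (hc : ∀ n, 1 ≤ n → c n ≤ a n / a (n - 1) - 1) {m : ℕ}
    (h1 : c (m + 1) = 0) (h2 : c (m + 2) ≠ 0) :
    (a m : ℝ) * ∑' i, (c (i + (m + 1)) : ℝ) / a (i + (m + 1)) ∈ Icc (1 / (M : ℝ) ^ 2) (1 / 2) := by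
  set u : ℕ → ℝ := fun n => (c n : ℝ) / a n with hu
  have hapos (n : ℕ) : (0 : ℝ) < a n := by exact_mod_cast ha.pos n
  have hu0 (n : ℕ) : 0 ≤ u n := div_nonneg (Nat.cast_nonneg _) (hapos n).le
  have htail : Summable fun i => u (i + (m + 1)) :=
    (summable_nat_add_iff _).2 (ha.summable_digit_div hc)
  set T := ∑' i, u (i + (m + 1)) with hT
  have hT_ge : u (m + 2) ≤ T := by
    simpa only [show 1 + (m + 1) = m + 2 by omega] using htail.le_tsum 1 fun j _ => hu0 _
  have hT_le : T ≤ 1 / a (m + 1) := by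
    rw [hT, htail.tsum_eq_zero_add, zero_add, show u (m + 1) = 0 by simp [u, h1], zero_add]
    exact (tsum_congr fun i => by rw [show i + 1 + (m + 1) = i + (m + 1 + 1) by omega]).trans_le
      (tsum_nat_add_le_of_le_sub hu0 (fun n => one_div_nonneg.2 (hapos n).le)
        (ha.digit_div_le hc) (m + 1))
  constructor
  · calc 1 / (M : ℝ) ^ 2 = (a m : ℝ) / ((M : ℝ) ^ 2 * a m) := by
          rw [div_mul_cancel_right₀ (hapos m).ne', one_div]
      _ ≤ (a m : ℝ) / a (m + 2) := by
        refine div_le_div_of_nonneg_left (hapos m).le (hapos _) ?_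
        have := (ha.succ_le_mul hqb (m + 1)).trans (Nat.mul_le_mul_left M (ha.succ_le_mul hqb m))
        exact_mod_cast (by nlinarith : a (m + 2) ≤ M ^ 2 * a m)
      _ ≤ (a m : ℝ) * u (m + 2) := by
        rw [hu, mul_div_assoc']
        gcongr
        exact le_mul_of_one_le_right (hapos m).le (by exact_mod_cast Nat.one_le_iff_ne_zero.2 h2)
      _ ≤ a m * T := mul_le_mul_of_nonneg_left hT_ge (hapos m).le
  · calc a m * T ≤ a m * (1 / a (m + 1)) := mul_le_mul_of_nonneg_left hT_le (hapos m).le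
      _ ≤ 1 / 2 := by
        rw [mul_one_div, div_le_div_iff₀ (hapos _) two_pos]
        exact_mod_cast (by linarith [ha.2.2.2 m] : a m * 2 ≤ 1 * a (m + 1))

theorem norm_zsmul_mem_Icc (ha : IsArith a) {M : ℕ} (hqb : ∀ n, 1 ≤ n → a n / a (n - 1) ≤ M)
    {c : ℕ → ℕ} (hc : ∀ n, 1 ≤ n → c n ≤ a n / a (n - 1) - 1) {m : ℕ}
    (h1 : c (m + 1) = 0) (h2 : c (m + 2) ≠ 0) :
    ‖(a m : ℤ) • ((∑' n, (c n : ℝ) / a n : ℝ) : AddCircle (1 : ℝ))‖ ∈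
      Icc (1 / (M : ℝ) ^ 2) (1 / 2) := by
  have hT := ha.mul_tsum_tail_mem_Icc hqb hc h1 h2
  have hTnn := (one_div_nonneg.2 (sq_nonneg (M : ℝ))).trans hT.1
  rw [zsmul_coe_tsum_eq ha (ha.summable_digit_div hc) m, (AddCircle.norm_coe_eq_abs_iff
    (p := 1) one_ne_zero).2 (by simpa [abs_of_nonneg hTnn] using hT.2), abs_of_nonneg hTnn]
  exact hT

end IsArith

theorem notMem_iUnion_Icc_of_succ_mem_range {l k : ℕ → ℕ} (hlk : ∀ n, l n ≤ k n)
    (hkl : ∀ n, k n + 1 < l (n + 1)) {i : ℕ} (hi : i + 1 ∈ Set.range l) :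
    i ∉ ⋃ n, Icc (l n) (k n) := by
  obtain ⟨j, hj⟩ := hi
  have hl : StrictMono l := strictMono_nat_of_lt_succ fun n => by linarith [hlk n, hkl n]
  simp only [mem_iUnion, mem_Icc, not_exists, not_and]
  intro n hln hin
  rcases lt_or_ge n j with hnj | hjn
  · linarith [hl.monotone (Nat.succ_le_of_lt hnj), hkl n]
  · linarith [hl.monotone hjn]

theorem stmt15 (f : ℝ → ℝ) (hf : IsUnboundedModulus f) (g : ℕ → ℝ) (hg : IsWeight g)
    (a : ℕ → ℕ) (ha : IsArith a) (M : ℕ) (hM : 2 ≤ M)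
    (hqb : ∀ n, 1 ≤ n → a n / a (n - 1) ≤ M)
    (x : AddCircle (1 : ℝ)) (c : ℕ → ℕ) (hx : IsCanonRep a c x)
    (l k : ℕ → ℕ) (hlk : ∀ n, l n ≤ k n) (hkl : ∀ n, k n + 1 < l (n + 1))
    (hsupp : {m | c m ≠ 0} = ⋃ n : ℕ, Set.Icc (l n) (k n))
    (hA : Set.range l ∉ Zd f g) :
    x ∉ statChar f g (fun n => (a n : ℤ)) ∧
    {m : ℕ | m + 2 ∈ Set.range l} ∉ Zd f g ∧
    ∀ m : ℕ, m + 2 ∈ Set.range l →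
      ‖((a m : ℤ)) • x‖ ∈ Set.Icc (1 / (M : ℝ) ^ 2) (1 / 2) := by
  have hblock (m : ℕ) (hm : m + 2 ∈ Set.range l) : c (m + 1) = 0 ∧ c (m + 2) ≠ 0 := by
    refine ⟨not_not.1 fun h => notMem_iUnion_Icc_of_succ_mem_range hlk hkl hm (hsupp ▸ h), ?_⟩
    obtain ⟨j, hj⟩ := hm
    change m + 2 ∈ {m | c m ≠ 0}
    exact hsupp ▸ mem_iUnion.2 ⟨j, hj ▸ ⟨le_rfl, hlk j⟩⟩
  have hnorm (m : ℕ) (hm : m + 2 ∈ Set.range l) :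
      ‖((a m : ℤ)) • x‖ ∈ Set.Icc (1 / (M : ℝ) ^ 2) (1 / 2) := by
    rw [hx.2.2.2]
    exact ha.norm_zsmul_mem_Icc hqb hx.2.1 (hblock m hm).1 (hblock m hm).2
  have hB : {m : ℕ | m + 2 ∈ Set.range l} ∉ Zd f g :=
    fun hB => hA (Zd.of_preimage_add hf hg.2.1 2 hB)
  have hMpos : (0 : ℝ) < 1 / (M : ℝ) ^ 2 := by
    have : (0 : ℝ) < M := by exact_mod_cast (by omega : 0 < M)
    positivity
  exact ⟨fun hxt => hB (Zd.mono hf hg.2.1 (fun m hm => (hnorm m hm).1) (hxt _ hMpos)), hB, hnorm⟩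
end
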